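/- arXiv:2502.08530 — 4 statements merged into one kernel-verified Lean document; each statement's English description precedes it below -/
import Mathlib

section
/- Let (C, v) ⊆ (L, v) ⊆ (M, v) be extensions of valued fields such that L has the separated basis property over C and M has the separated basis property over L. Then M has the separated basis property over C. -/
/-!
Let `V` be a finite-dimensional `C`-subspace of `M`, spanned by a finite set `S`. The `L`-span of
`S` has a separated `L`-basis `e`, so every `y ∈ S` is `∑ i, a y i * e i` with `a y i ∈ L`. For
each `i` the `C`-span of the coefficients `a y i` is a finite-dimensional `C`-subspace of `L`,
hence has a separated `C`-basis `f i`. The products `f i t * e i` form a family separated over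
`C` (compute the valuation of a combination first over `L`, then over `C`) whose span contains
`V`. Finally, every subspace of the span of a separated family has a separated basis: pick
`x ≠ 0` in it and an index `i` at which the maximum in the valuation of `x` is attained; then `x`
is orthogonal to the span of the other vectors of the family, and induction on the number of
vectors gives a separated basis of the rest of the subspace, which `x` completes.
-/

variable {M Γ : Type*} [Field M] [LinearOrderedCommGroupWithZero Γ]

instance : OrderBot Γ where
  bot := 0
  bot_le := fun _ => zero_le'

/-- The tuple `b` is separated over the subfield `C`. -/
def Valuation.IsSeparatedTuple (v : Valuation M Γ) (C : Subfield M) {n : ℕ} (b : Fin n → M) :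
    Prop :=
  ∀ c : Fin n → C, v (∑ i, (c i : M) * b i) = Finset.univ.sup fun i => v (c i : M) * v (b i)

open Finset Submodule

theorem Finset.sup_mul_const {α : Type*} (s : Finset α) (f : α → Γ) (γ : Γ) :
    s.sup f * γ = s.sup fun a => f a * γ :=
  apply_sup_eq_sup_comp_of_linearOrder (· * γ) (fun _ _ h => mul_le_mul_left h γ)
    (zero_mul γ)

theorem Valuation.map_add_eq_max_of_le_map_add {R Γ₀ : Type*} [Ring R]
    [LinearOrderedCommMonoidWithZero Γ₀] (v : Valuation R Γ₀) {x z : R}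
    (h : v x ≤ v (x + z)) : v (x + z) = max (v x) (v z) := by
  rcases le_or_gt (v z) (v x) with hzx | hxz
  · rw [max_eq_left hzx]
    exact le_antisymm ((v.map_add x z).trans (max_le le_rfl hzx)) h
  · rw [max_eq_right hxz.le]
    exact v.map_add_eq_of_lt_right hxz

theorem Submodule.span_singleton_sup_inf_span_image_diff {K E ι : Type*} [DivisionRing K]
    [AddCommGroup E] [Module K E] {b : ι → E} {V : Submodule K E} {s : Set ι}
    (hV : V ≤ span K (b '' s)) {l : ι →₀ K} (hl : l ∈ Finsupp.supported K K s)
    (hlV : Finsupp.linearCombination K b l ∈ V) {i : ι} (hli : l i ≠ 0) :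
    K ∙ Finsupp.linearCombination K b l ⊔ (V ⊓ span K (b '' (s \ {i}))) = V := by
  refine le_antisymm (sup_le ((span_singleton_le_iff_mem _ _).2 hlV) inf_le_left) fun y hy => ?_
  obtain ⟨l', hl', rfl⟩ := (Finsupp.mem_span_image_iff_linearCombination K).1 (hV hy)
  set a := l' i / l i
  have hrest : l' - a • l ∈ Finsupp.supported K K (s \ {i}) := by
    have hs := sub_mem hl' (smul_mem _ a hl)
    rw [Finsupp.mem_supported'] at hs ⊢
    intro j hj
    by_cases hjs : j ∈ s
    · obtain rfl : j = i := by simpa [hjs] using hj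
      simp [a, hli]
    · exact hs j hjs
  rw [mem_sup]
  refine ⟨a • Finsupp.linearCombination K b l, smul_mem _ a (mem_span_singleton_self _),
    Finsupp.linearCombination K b (l' - a • l), ⟨?_, ?_⟩, ?_⟩
  · rw [map_sub, map_smul]
    exact sub_mem hy (smul_mem _ a hlV)
  · exact (Finsupp.mem_span_image_iff_linearCombination K).2 ⟨_, hrest, rfl⟩
  · rw [map_sub, map_smul, add_sub_cancel]

theorem Submodule.sum_mul_mem_span_sigma {K A : Type*} [CommSemiring K] [Semiring A]
    [Algebra K A] {ι : Type*} [Fintype ι] {κ : ι → Type*} [∀ i, Fintype (κ i)] {e : ι → A}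
    {f : ∀ i, κ i → A} {a : ι → A} (ha : ∀ i, a i ∈ span K (Set.range (f i))) :
    ∑ i, a i * e i ∈ span K (Set.range fun p : Σ i, κ i => f p.1 p.2 * e p.1) := by
  refine sum_mem fun i _ => ?_
  obtain ⟨q, hq⟩ := (mem_span_range_iff_exists_fun K).1 (ha i)
  rw [← hq, sum_mul]
  exact sum_mem fun t _ => smul_mul_assoc (q t) (f i t) (e i) ▸
    smul_mem _ (q t) (subset_span ⟨⟨i, t⟩, rfl⟩)

theorem Subfield.coe_span_subset_of_le {C L : Subfield M} (h : C ≤ L) {s : Set M}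
    (hs : s ⊆ L) : (span C s : Set M) ⊆ L :=
  let W : Submodule C M :=
    { L.toAddSubgroup.toAddSubmonoid with
      smul_mem' := fun c _ hx => L.mul_mem (h c.2) hx }
  span_le (p := W) |>.2 hs

namespace Valuation

/-- Agrees definitionally with `IsSeparatedTuple` when `ι = Fin n`. -/
def IsSeparated (v : Valuation M Γ) (C : Subfield M) {ι : Type*} [Fintype ι] (b : ι → M) :
    Prop :=
  ∀ c : ι → C, v (∑ i, (c i : M) * b i) = univ.sup fun i => v (c i : M) * v (b i)

def HasSeparatedBasis (v : Valuation M Γ) (C : Subfield M) (V : Submodule C M) : Prop :=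
  ∃ (n : ℕ) (b : Fin n → M), LinearIndependent C b ∧
    span C (Set.range b) = V ∧ v.IsSeparatedTuple C b

variable {v : Valuation M Γ} {C : Subfield M} {ι : Type*} [Fintype ι] {b : ι → M}

namespace IsSeparated

theorem linearIndependent (hb : v.IsSeparated C b) (hb0 : ∀ i, b i ≠ 0) :
    LinearIndependent C b := by
  refine Fintype.linearIndependent_iff.2 fun c hc i => ?_
  have hsup : (univ.sup fun j => v (c j : M) * v (b j)) = 0 := by
    rw [← hb c]
    exact (congrArg v hc).trans v.map_zero
  have hi : v (c i : M) * v (b i) = 0 :=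
    le_zero_iff.1 (hsup ▸ le_sup (f := fun j => v (c j : M) * v (b j)) (mem_univ i))
  simpa [hb0 i] using hi

theorem map_linearCombination (hb : v.IsSeparated C b) (l : ι →₀ C) :
    v (Finsupp.linearCombination C b l) = univ.sup fun i => v (l i : M) * v (b i) := by
  rw [Finsupp.linearCombination_apply, Finsupp.sum_fintype _ _ fun i => zero_smul C (b i)]
  exact hb l

theorem le_map_add_of_mem_span (hb : v.IsSeparated C b) {l : ι →₀ C} {i : ι}
    (hi : v (Finsupp.linearCombination C b l) = v (l i : M) * v (b i)) {z : M}
    (hz : z ∈ span C (b '' {i}ᶜ)) :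
    v (Finsupp.linearCombination C b l) ≤ v (Finsupp.linearCombination C b l + z) := by
  obtain ⟨l', hl', rfl⟩ := (Finsupp.mem_span_image_iff_linearCombination C).1 hz
  have hl'i : l' i = 0 := (Finsupp.mem_supported' C l').1 hl' i (by simp)
  rw [← map_add, hi, hb.map_linearCombination]
  exact le_sup_of_le (f := fun j => v ((l + l') j : M) * v (b j)) (mem_univ i) (by simp [hl'i])

theorem cons {n : ℕ} {d : Fin n → M} (hd : v.IsSeparated C d) {x : M}
    (hx : ∀ z ∈ span C (Set.range d), v x ≤ v (x + z)) :
    v.IsSeparated C (Fin.cons x d : Fin (n + 1) → M) := by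
  intro c
  set w := ∑ t, (c t.succ : M) * d t
  have hw : w ∈ span C (Set.range d) :=
    sum_mem fun t _ => smul_mem _ (c t.succ) (subset_span (Set.mem_range_self t))
  have horth : v (c 0 * x) ≤ v (c 0 * x + w) := by
    rcases eq_or_ne (c 0 : M) 0 with h0 | h0
    · simp [h0]
    calc v (c 0 * x) = v (c 0) * v x := v.map_mul _ _
      _ ≤ v (c 0) * v (x + (c 0 : M)⁻¹ * w) :=
        mul_le_mul_right (hx _ (smul_mem _ (c 0)⁻¹ hw)) _
      _ = v (c 0 * x + w) := by rw [← v.map_mul, mul_add, mul_inv_cancel_left₀ h0]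
  rw [Fin.sum_univ_succ, Fin.univ_succ, sup_cons, sup_map]
  simp only [Fin.cons_zero, Fin.cons_succ]
  rw [v.map_add_eq_max_of_le_map_add horth, hd, v.map_mul]
  rfl

theorem hasSeparatedBasis_of_le_span_image (hb : v.IsSeparated C b) (s : Finset ι)
    {V : Submodule C M} (hV : V ≤ span C (b '' s)) : v.HasSeparatedBasis C V := by
  classical
  induction s using Finset.strongInduction generalizing V with
  | H s ih =>
  rcases eq_or_ne V ⊥ with rfl | hV0
  · exact ⟨0, Fin.elim0, linearIndependent_empty_type, by simp, fun c => by simp; rfl⟩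
  obtain ⟨x, hxV, hx0⟩ := exists_mem_ne_zero_of_ne_bot hV0
  obtain ⟨l, hl, rfl⟩ := (Finsupp.mem_span_image_iff_linearCombination C).1 (hV hxV)
  obtain ⟨j, -⟩ := Finsupp.ne_iff.1 fun h : l = 0 => hx0 (by simp [h])
  have : Nonempty ι := ⟨j⟩
  obtain ⟨i, -, hi⟩ := exists_mem_eq_sup univ univ_nonempty fun i => v (l i : M) * v (b i)
  rw [← hb.map_linearCombination] at hi
  have hli : l i ≠ 0 := by
    rintro h
    exact hx0 (v.zero_iff.1 (by simp [hi, h]))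
  have his : i ∈ s := by
    by_contra his
    exact hli ((Finsupp.mem_supported' C l).1 hl i his)
  obtain ⟨k, d, hd_li, hd_span, hd⟩ :=
    ih (s.erase i) (erase_ssubset his) (V := V ⊓ span C (b '' ↑(s.erase i))) inf_le_right
  have hsep : v.IsSeparated C (Fin.cons (Finsupp.linearCombination C b l) d) :=
    IsSeparated.cons hd fun z hz => hb.le_map_add_of_mem_span hi <|
      span_mono (Set.image_mono fun j hj => (mem_erase.1 hj).1) (hd_span ▸ hz).2
  refine ⟨k + 1, _, hsep.linearIndependent (Fin.cases hx0 hd_li.ne_zero), ?_, hsep⟩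
  rw [Fin.range_cons, span_insert, hd_span, coe_erase]
  exact span_singleton_sup_inf_span_image_diff hV hl hxV hli

theorem hasSeparatedBasis_of_le_span (hb : v.IsSeparated C b) {V : Submodule C M}
    (hV : V ≤ span C (Set.range b)) : v.HasSeparatedBasis C V :=
  hb.hasSeparatedBasis_of_le_span_image univ (by simpa using hV)

theorem sigma_mul {L : Subfield M} (hCL : C ≤ L) {κ : ι → Type*} [∀ i, Fintype (κ i)]
    {e : ι → M} (he : v.IsSeparated L e) {f : ∀ i, κ i → M} (hfL : ∀ i t, f i t ∈ L)
    (hf : ∀ i, v.IsSeparated C (f i)) :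
    v.IsSeparated C fun p : Σ i, κ i => f p.1 p.2 * e p.1 := by
  intro c
  let A : ι → L := fun i => ⟨∑ t, (c ⟨i, t⟩ : M) * f i t,
    sum_mem fun t _ => mul_mem (hCL (c ⟨i, t⟩).2) (hfL i t)⟩
  calc v (∑ p, (c p : M) * (f p.1 p.2 * e p.1))
      = v (∑ i, (A i : M) * e i) := by
        rw [← univ_sigma_univ, sum_sigma]
        simp only [A, sum_mul, mul_assoc]
    _ = univ.sup fun i => v (A i : M) * v (e i) := he A
    _ = univ.sup fun i => univ.sup fun t => v (c ⟨i, t⟩ : M) * v (f i t) * v (e i) := by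
        refine congrArg univ.sup (funext fun i => ?_)
        rw [hf i fun t => c ⟨i, t⟩, sup_mul_const]
    _ = univ.sup fun p => v (c p : M) * v (f p.1 p.2 * e p.1) := by
        rw [← univ_sigma_univ, sup_sigma]
        simp only [v.map_mul, mul_assoc]

end IsSeparated

end Valuation

theorem separated_basis_property_transitive
    (v : Valuation M Γ) (C L : Subfield M) (hCL : C ≤ L)
    (hLC : ∀ V : Submodule C M, FiniteDimensional C V → (V : Set M) ⊆ (L : Set M) →
      ∃ (n : ℕ) (b : Fin n → M), LinearIndependent C b ∧
        Submodule.span C (Set.range b) = V ∧ v.IsSeparatedTuple C b)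
    (hML : ∀ V : Submodule L M, FiniteDimensional L V →
      ∃ (n : ℕ) (b : Fin n → M), LinearIndependent L b ∧
        Submodule.span L (Set.range b) = V ∧ v.IsSeparatedTuple L b) :
    ∀ V : Submodule C M, FiniteDimensional C V →
      ∃ (n : ℕ) (b : Fin n → M), LinearIndependent C b ∧
        Submodule.span C (Set.range b) = V ∧ v.IsSeparatedTuple C b := by
  intro V hV
  obtain ⟨S, rfl⟩ := Module.Finite.iff_fg.1 hV
  obtain ⟨m, e, -, he_span, he⟩ := hML (span L S) (FiniteDimensional.span_of_finite L S.finite_toSet)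
  have hS : ∀ y : S, ∃ a : Fin m → L, ∑ i, (a i : M) * e i = y := fun y =>
    (mem_span_range_iff_exists_fun L).1 (he_span ▸ subset_span y.2)
  choose a ha using hS
  set U : Fin m → Submodule C M := fun i => span C (Set.range fun y => (a y i : M))
  have hUL : ∀ i, (U i : Set M) ⊆ L := fun i =>
    Subfield.coe_span_subset_of_le hCL (Set.range_subset_iff.2 fun y => (a y i).2)
  have hU : ∀ i, v.HasSeparatedBasis C (U i) := fun i =>
    hLC _ (FiniteDimensional.span_of_finite C (Set.finite_range _)) (hUL i)
  choose n f _ hf_span hf using hU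
  have hfL : ∀ i t, f i t ∈ L := fun i t => hUL i (hf_span i ▸ subset_span ⟨t, rfl⟩)
  refine (Valuation.IsSeparated.sigma_mul hCL he hfL hf).hasSeparatedBasis_of_le_span ?_
  refine span_le.2 fun y hy => (show _ = y from ha ⟨y, hy⟩) ▸ ?_
  exact sum_mul_mem_span_sigma fun i => hf_span i ▸ subset_span ⟨⟨y, hy⟩, rfl⟩
end

section
/- Let (C, v) ⊆ (L, v) ⊆ (M, v) be extensions of valued fields. Suppose (e_1, …, e_m) is a tuple of elements of L that is C-linearly independent and separated over C, and (f_1, …, f_n) is a tuple of elements of M that is L-linearly independent and separated over L. Then the family of all products (e_j f_i)_{1 ≤ j ≤ m, 1 ≤ i ≤ n} is C-linearly independent and separated over C; that is, for all c_{i,j} ∈ C, v(∑_{i,j} c_{i,j} e_j f_i) = min_{i,j} (v(c_{i,j}) + v(e_j) + v(f_i)). -/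
/-! `C ⊆ L ⊆ M` are subfields of the ambient valued field `M`; `v` is written multiplicatively,
so the minimum of the additive notation becomes a `sup`.

Writing `∑ c_{ij} e_j f_i = ∑_i (∑_j c_{ij} e_j) f_i`, the inner coefficients lie in `L`,
so separatedness of `f` over `L` and then of `e` over `C` computes the valuation. A vanishing
combination then has every term of valuation `0`, which gives linear independence. -/

variable {M Γ : Type*} [Field M] [LinearOrderedCommGroupWithZero Γ]

theorem Finset.sup_mul_right₀ {ι : Type*} (s : Finset ι) (g : ι → Γ) (b : Γ) :
    s.sup g * b = s.sup fun i => g i * b :=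
  Finset.apply_sup_eq_sup_comp_of_linearOrder (· * b) (fun _ _ h => mul_le_mul_left h b)
    (zero_mul b)

namespace Valuation

variable (v : Valuation M Γ) (C : Subfield M)

theorem linearIndependent_of_map_sum_eq_sup {ι : Type*} [Fintype ι] {b : ι → M}
    (hb : ∀ i, b i ≠ 0)
    (hsep : ∀ c : ι → C,
      v (∑ i, (c i : M) * b i) = Finset.univ.sup fun i => v (c i : M) * v (b i)) :
    LinearIndependent C b := by
  rw [Fintype.linearIndependent_iff]
  intro c hc i
  have hsup_zero : (Finset.univ.sup fun i => v (c i : M) * v (b i)) = 0 := by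
    rw [← hsep c]
    exact (congrArg v hc).trans v.map_zero
  have hterm : v (c i : M) * v (b i) = 0 :=
    le_antisymm (hsup_zero ▸ Finset.le_sup (f := fun i => v (c i : M) * v (b i))
      (Finset.mem_univ i)) zero_le
  have hci : v (c i : M) = 0 :=
    (mul_eq_zero.mp hterm).resolve_right (v.ne_zero_iff.mpr (hb i))
  exact_mod_cast v.zero_iff.mp hci

variable {v C}

theorem map_sum_mul_mul_eq_sup {L : Subfield M} (hCL : C ≤ L) {m n : ℕ}
    {e : Fin m → M} (heL : ∀ j, e j ∈ L) {f : Fin n → M}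
    (heSep : v.IsSeparatedTuple C e) (hfSep : v.IsSeparatedTuple L f)
    (c : Fin m × Fin n → C) :
    v (∑ p : Fin m × Fin n, (c p : M) * (e p.1 * f p.2)) =
      Finset.univ.sup fun p : Fin m × Fin n => v (c p : M) * v (e p.1) * v (f p.2) := by
  let g : Fin n → L := fun i => ⟨∑ j, (c (j, i) : M) * e j,
    L.sum_mem fun j _ => L.mul_mem (hCL (c (j, i)).2) (heL j)⟩
  have hregroup : ∑ p : Fin m × Fin n, (c p : M) * (e p.1 * f p.2) = ∑ i, (g i : M) * f i := by
    rw [← Finset.univ_product_univ, Finset.sum_product_right]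
    simp only [g, Finset.sum_mul, mul_assoc]
  rw [hregroup, hfSep g, ← Finset.univ_product_univ, Finset.sup_product_right]
  refine Finset.sup_congr rfl fun i _ => ?_
  rw [heSep fun j => c (j, i), Finset.sup_mul_right₀]

end Valuation

theorem product_of_separated_tuples_is_separated
    (v : Valuation M Γ) (C L : Subfield M) (hCL : C ≤ L) {m n : ℕ}
    (e : Fin m → M) (heL : ∀ j, e j ∈ L)
    (f : Fin n → M)
    (heInd : LinearIndependent C e) (heSep : v.IsSeparatedTuple C e)
    (hfInd : LinearIndependent L f) (hfSep : v.IsSeparatedTuple L f) :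
    LinearIndependent C (fun p : Fin m × Fin n => e p.1 * f p.2) ∧
      ∀ c : Fin m × Fin n → C,
        v (∑ p : Fin m × Fin n, (c p : M) * (e p.1 * f p.2)) =
          Finset.univ.sup fun p : Fin m × Fin n =>
            v (c p : M) * v (e p.1) * v (f p.2) := by
  have hsep := Valuation.map_sum_mul_mul_eq_sup hCL heL heSep hfSep
  refine ⟨v.linearIndependent_of_map_sum_eq_sup C
    (fun p => mul_ne_zero (heInd.ne_zero p.1) (hfInd.ne_zero p.2)) fun c => ?_, hsep⟩
  simp only [hsep c, map_mul, mul_assoc]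
end

section
/- Let (N, v) be a valued field and let C, F, L, L' be subfields of N with C ⊆ F, C ⊆ L, C ⊆ L'. Let σ : L → L' be a ring isomorphism fixing C pointwise and preserving the valuation (v(σ(x)) = v(x) for all x ∈ L), and let τ : F[L] → F[L'] be a ring isomorphism between the F-subalgebras of N generated by L and by L' such that τ extends σ and fixes F pointwise. Assume that every element d of F[L] admits a separated representation from L over F, and that every element of F[L'] admits a separated representation from L' over F. Then τ preserves the valuation: v(τ(d)) = v(d) for all d ∈ F[L]; in particular τ extends to a valued field isomorphism between the composita LF and L'F inside the algebraic setting of N. -/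
/-!
If `d = ∑ fᵢ lᵢ` is separated, then `τ d = ∑ fᵢ σ(lᵢ)` and the ultrametric inequality gives
`v (τ d) ≤ maxᵢ v(fᵢ) v(σ lᵢ) = maxᵢ v(fᵢ) v(lᵢ) = v d`. The reverse inequality is the same
argument for `τ⁻¹`, using separated representations from `L'`.
-/

variable {N Γ : Type*} [Field N] [LinearOrderedCommGroupWithZero Γ]

/-- The `F`-subalgebra `F[L]` of `N` generated by the subfields `F` and `L`,
as a subring of `N`. -/
def Subfield.adjoinSubfield (F L : Subfield N) : Subring N :=
  Subring.closure ((F : Set N) ∪ (L : Set N))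

/-- `d` admits a separated representation from `L` over `F`. -/
def Valuation.HasSeparatedRepresentation (v : Valuation N Γ) (F L : Subfield N) (d : N) : Prop :=
  ∃ (k : ℕ) (f l : Fin k → N), (∀ i, f i ∈ F) ∧ (∀ i, l i ∈ L) ∧
    d = ∑ i, f i * l i ∧ v d = Finset.univ.sup fun i => v (f i) * v (l i)

namespace Subfield

variable {F L : Subfield N} {x : N}

theorem mem_adjoinSubfield_left (hx : x ∈ F) : x ∈ adjoinSubfield F L :=
  Subring.subset_closure (Or.inl hx)

theorem mem_adjoinSubfield_right (hx : x ∈ L) : x ∈ adjoinSubfield F L :=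
  Subring.subset_closure (Or.inr hx)

end Subfield

open Subfield

theorem Valuation.HasSeparatedRepresentation.valuation_map_le {v : Valuation N Γ}
    {F L : Subfield N} {d : adjoinSubfield F L} (hd : v.HasSeparatedRepresentation F L d)
    {R : Type*} [Ring R] (w : Valuation R Γ) (φ : adjoinSubfield F L →+* R)
    (hF : ∀ x (hx : x ∈ F), w (φ ⟨x, mem_adjoinSubfield_left hx⟩) ≤ v x)
    (hL : ∀ x (hx : x ∈ L), w (φ ⟨x, mem_adjoinSubfield_right hx⟩) ≤ v x) :
    w (φ d) ≤ v d := by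
  obtain ⟨k, f, l, hf, hl, hsum, hval⟩ := hd
  have hd : d = ∑ i, (⟨f i, mem_adjoinSubfield_left (hf i)⟩ : adjoinSubfield F L) *
      ⟨l i, mem_adjoinSubfield_right (hl i)⟩ :=
    Subtype.ext (by push_cast; exact hsum)
  rw [hval, hd, map_sum]
  refine w.map_sum_le fun i _ => ?_
  rw [map_mul, w.map_mul]
  exact (mul_le_mul' (hF _ (hf i)) (hL _ (hl i))).trans
    (Finset.le_sup (f := fun i => v (f i) * v (l i)) (Finset.mem_univ i))

theorem valuation_preserved_by_isomorphism_of_separated_composita_general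
    (v : Valuation N Γ) (F L L' : Subfield N)
    (σ : L ≃+* L')
    (hσv : ∀ x : L, v ((σ x : L') : N) = v (x : N))
    (τ : Subfield.adjoinSubfield F L ≃+* Subfield.adjoinSubfield F L')
    (hτF : ∀ (x : N) (hx : x ∈ Subfield.adjoinSubfield F L), x ∈ F →
      ((τ ⟨x, hx⟩ : Subfield.adjoinSubfield F L') : N) = x)
    (hτσ : ∀ (x : N) (hxL : x ∈ L) (hx : x ∈ Subfield.adjoinSubfield F L),
      ((τ ⟨x, hx⟩ : Subfield.adjoinSubfield F L') : N) = ((σ ⟨x, hxL⟩ : L') : N))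
    (hrep : ∀ d : Subfield.adjoinSubfield F L, v.HasSeparatedRepresentation F L (d : N))
    (hrep' : ∀ d : Subfield.adjoinSubfield F L', v.HasSeparatedRepresentation F L' (d : N)) :
    ∀ d : Subfield.adjoinSubfield F L,
      v ((τ d : Subfield.adjoinSubfield F L') : N) = v (d : N) := by
  intro d
  refine le_antisymm ((hrep d).valuation_map_le v ((adjoinSubfield F L').subtype.comp τ)
    (fun x hx => (congrArg v (hτF x _ hx)).le)
    (fun x hx => ((congrArg v (hτσ x hx _)).trans (hσv _)).le)) ?_
  have hτ_symm_F (x : N) (hx : x ∈ F) :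
      τ.symm ⟨x, mem_adjoinSubfield_left hx⟩ = ⟨x, mem_adjoinSubfield_left hx⟩ :=
    τ.symm_apply_eq.2 (Subtype.ext (hτF x _ hx)).symm
  have hτ_symm_L' (x : N) (hx : x ∈ L') :
      τ.symm ⟨x, mem_adjoinSubfield_right hx⟩ =
        ⟨σ.symm ⟨x, hx⟩, mem_adjoinSubfield_right (σ.symm ⟨x, hx⟩).2⟩ :=
    τ.symm_apply_eq.2 (Subtype.ext (by simp [hτσ]))
  simpa using (hrep' (τ d)).valuation_map_le v ((adjoinSubfield F L).subtype.comp τ.symm)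
    (fun x hx => by simp [hτ_symm_F x hx])
    (fun x hx => by simp [hτ_symm_L' x hx, ← hσv])

theorem valuation_preserved_by_isomorphism_of_separated_composita
    (v : Valuation N Γ) (C F L L' : Subfield N)
    (hCF : C ≤ F) (hCL : C ≤ L) (hCL' : C ≤ L')
    (σ : L ≃+* L')
    (hσC : ∀ x : L, (x : N) ∈ C → ((σ x : L') : N) = (x : N))
    (hσv : ∀ x : L, v ((σ x : L') : N) = v (x : N))
    (τ : Subfield.adjoinSubfield F L ≃+* Subfield.adjoinSubfield F L')
    (hτF : ∀ (x : N) (hx : x ∈ Subfield.adjoinSubfield F L), x ∈ F →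
      ((τ ⟨x, hx⟩ : Subfield.adjoinSubfield F L') : N) = x)
    (hτσ : ∀ (x : N) (hxL : x ∈ L) (hx : x ∈ Subfield.adjoinSubfield F L),
      ((τ ⟨x, hx⟩ : Subfield.adjoinSubfield F L') : N) = ((σ ⟨x, hxL⟩ : L') : N))
    (hrep : ∀ d : Subfield.adjoinSubfield F L, v.HasSeparatedRepresentation F L (d : N))
    (hrep' : ∀ d : Subfield.adjoinSubfield F L', v.HasSeparatedRepresentation F L' (d : N)) :
    ∀ d : Subfield.adjoinSubfield F L,
      v ((τ d : Subfield.adjoinSubfield F L') : N) = v (d : N) :=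
  valuation_preserved_by_isomorphism_of_separated_composita_general v F L L' σ hσv τ hτF hτσ hrep
    hrep'
end

section
/- Let (L, v) be a henselian valued field of equicharacteristic zero (the valuation ring O_L of L is a henselian local ring, and both L and its residue field k_L have characteristic zero), and let C be a subfield of L with the restricted valuation, residue field k_C (the image of O_L ∩ C under the residue map). Assume C is relatively algebraically closed in L, i.e., every element of L that is algebraic over C belongs to C. Then k_C is relatively algebraically closed in k_L: every element of k_L that is algebraic over k_C belongs to k_C. -/
/-!
STATEMENT 6: Let (L,v) be a henselian valued field of equicharacteristic zero,
and C ⊆ L a subfield that is relatively algebraically closed in L. Then the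
residue field k_C of C (the image of O_L ∩ C under the residue map) is
relatively algebraically closed in k_L.

"Henselian" is expressed as `HenselianLocalRing v.valuationSubring`;
"x is algebraic over the subfield C" is expressed by the existence of a nonzero
polynomial with coefficients in C vanishing at x.
-/

variable {L Γ : Type*} [Field L] [LinearOrderedCommGroupWithZero Γ]

/-- The residue field of a subfield `C` of the valued field `L`: the image of
`O_L ∩ C` under the residue map, as a subring of the residue field of `L`. -/
def residueOfSubfield (v : Valuation L Γ) (C : Subfield L) :
    Subring (IsLocalRing.ResidueField v.valuationSubring) :=
  Subring.map (IsLocalRing.residue v.valuationSubring)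
    (Subring.comap v.valuationSubring.subtype C.toSubring)

/-!
The minimal polynomial of an algebraic element `y` of `k_L` over `k_C` is separable (characteristic
zero), so `y` is a simple root of it. Lifting its coefficients to `O_L ∩ C` gives a monic polynomial
over `O_L` with coefficients in `C`, and Hensel's lemma lifts `y` to a root `a ∈ O_L` of it. Then `a`
is algebraic over `C`, hence lies in `C`, and `y = res a ∈ k_C`.
-/

open Polynomial IsLocalRing

theorem exists_coeff_mem_iff_isAlgebraic {E : Type*} [Field E] (K : Subfield E) (x : E) :
    (∃ p : E[X], p ≠ 0 ∧ (∀ i, p.coeff i ∈ K) ∧ p.eval x = 0) ↔ IsAlgebraic K x := by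
  constructor
  · rintro ⟨p, hp0, hpK, hpx⟩
    obtain ⟨p', rfl⟩ := (mem_lifts p).1 <|
      (lifts_iff_coeff_lifts (f := K.subtype) p).2 fun n => by simpa using hpK n
    exact ⟨p', fun h => hp0 (by rw [h, Polynomial.map_zero]), by rwa [eval_map] at hpx⟩
  · rintro ⟨p, hp0, hpx⟩
    refine ⟨p.map K.subtype, (Polynomial.map_ne_zero_iff K.subtype_injective).2 hp0,
      fun i => by simp, ?_⟩
    rw [eval_map]
    exact hpx

theorem inv_mem_residueOfSubfield (v : Valuation L Γ) (C : Subfield L)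
    {u : ResidueField v.valuationSubring} (hu : u ∈ residueOfSubfield v C) :
    u⁻¹ ∈ residueOfSubfield v C := by
  obtain ⟨x, hxC, rfl⟩ := hu
  by_cases hx : IsUnit x
  · refine ⟨↑hx.unit⁻¹, ?_, ?_⟩
    · have : ((↑hx.unit⁻¹ : v.valuationSubring) : L) = (x : L)⁻¹ :=
        eq_inv_of_mul_eq_one_left (by exact_mod_cast hx.val_inv_mul)
      simpa [this] using C.inv_mem hxC
    · exact eq_inv_of_mul_eq_one_left (by rw [← map_mul, hx.val_inv_mul, map_one])
  · rw [← residue_ne_zero_iff_isUnit, not_not] at hx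
    rw [hx, inv_zero]
    exact zero_mem _

def residueSubfield (v : Valuation L Γ) (C : Subfield L) :
    Subfield (ResidueField v.valuationSubring) where
  toSubring := residueOfSubfield v C
  inv_mem' _ := inv_mem_residueOfSubfield v C

theorem HenselianLocalRing.exists_residue_eq_of_lifts {R A : Type*} [CommRing R]
    [HenselianLocalRing R] [Semiring A] (φ : A →+* R) {q : (ResidueField R)[X]} (hq : q.Monic)
    (hlifts : q ∈ lifts ((residue R).comp φ)) {y : ResidueField R} (hy : q.eval y = 0)
    (hy' : q.derivative.eval y ≠ 0) :
    ∃ a : R, residue R a = y ∧ ∃ Q : A[X], Q.Monic ∧ Q.eval₂ φ a = 0 := by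
  obtain ⟨Q, rfl, -, hQ⟩ := lifts_and_degree_eq_and_monic hlifts hq
  have hmap : (Q.map φ).map (residue R) = Q.map ((residue R).comp φ) := Polynomial.map_map ..
  have hensel := ((HenselianLocalRing.TFAE R).out 0 1).1 ‹HenselianLocalRing R›
  obtain ⟨a, ha, rfl⟩ := hensel (Q.map φ) (hQ.map φ) y
    (by rwa [aeval_def, ← eval_map, ResidueField.algebraMap_eq, hmap])
    (by rwa [aeval_def, ← eval_map, ResidueField.algebraMap_eq, ← derivative_map, hmap])
  exact ⟨a, rfl, Q, hQ, by rwa [← eval_map]⟩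

theorem residue_of_relatively_algebraically_closed_general
    (v : Valuation L Γ)
    [HenselianLocalRing v.valuationSubring]
    [CharZero (IsLocalRing.ResidueField v.valuationSubring)]
    (C : Subfield L)
    (hC : ∀ x : L, (∃ p : Polynomial L, p ≠ 0 ∧ (∀ i, p.coeff i ∈ C) ∧
        Polynomial.eval x p = 0) → x ∈ C) :
    ∀ y : IsLocalRing.ResidueField v.valuationSubring,
      (∃ p : Polynomial (IsLocalRing.ResidueField v.valuationSubring), p ≠ 0 ∧
        (∀ i, p.coeff i ∈ residueOfSubfield v C) ∧ Polynomial.eval y p = 0) →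
      y ∈ residueOfSubfield v C := by
  intro y hy
  set K := residueSubfield v C
  have hyK : IsAlgebraic K y := (exists_coeff_mem_iff_isAlgebraic K y).1 hy
  have hsep : (minpoly K y).Separable := (minpoly.irreducible hyK.isIntegral).separable
  set O₀ := Subring.comap v.valuationSubring.subtype C.toSubring
  have hlifts : (minpoly K y).map K.subtype ∈ lifts ((residue _).comp O₀.subtype) := by
    refine (lifts_iff_coeff_lifts _).2 fun n => ?_
    obtain ⟨x, hx, hxy⟩ := ((minpoly K y).coeff n).2
    exact ⟨⟨x, hx⟩, by simpa using hxy⟩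
  obtain ⟨a, rfl, Q, hQ, hQa⟩ := HenselianLocalRing.exists_residue_eq_of_lifts O₀.subtype
    ((minpoly.monic hyK.isIntegral).map K.subtype) hlifts
    (by rw [eval_map]; exact minpoly.aeval K y)
    (by rw [derivative_map, eval_map]; exact hsep.aeval_derivative_ne_zero (minpoly.aeval K y))
  refine ⟨a, hC _ ⟨Q.map (v.valuationSubring.subtype.comp O₀.subtype), (hQ.map _).ne_zero,
    fun i => by rw [coeff_map]; exact (Q.coeff i).2, ?_⟩, rfl⟩
  rw [eval_map, ← hom_eval₂, hQa, map_zero]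

theorem residue_of_relatively_algebraically_closed
    (v : Valuation L Γ)
    [HenselianLocalRing v.valuationSubring]
    [CharZero L] [CharZero (IsLocalRing.ResidueField v.valuationSubring)]
    (C : Subfield L)
    (hC : ∀ x : L, (∃ p : Polynomial L, p ≠ 0 ∧ (∀ i, p.coeff i ∈ C) ∧
        Polynomial.eval x p = 0) → x ∈ C) :
    ∀ y : IsLocalRing.ResidueField v.valuationSubring,
      (∃ p : Polynomial (IsLocalRing.ResidueField v.valuationSubring), p ≠ 0 ∧
        (∀ i, p.coeff i ∈ residueOfSubfield v C) ∧ Polynomial.eval y p = 0) →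
      y ∈ residueOfSubfield v C :=
  residue_of_relatively_algebraically_closed_general v C hC
end
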